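/- Let q₁ and q₂ be distinct primes congruent to 3 mod 4 with q₁ a quadratic residue mod q₂. Then q₂ is not the norm of an algebraic integer of ℚ(√(q₁q₂)). -/

import Mathlib

/-!
If `α = p + q√d` with `d = q₁q₂` has norm `q₂`, then `t = 2p` (the trace of `α`) is an integer, and
so is `u = 2q`, because `d u² = t² - 4q₂` and `d` is squarefree. Reducing `t² - d u² = 4q₂` mod `q₁`
makes `q₂` a square mod `q₁`; together with `q₁` a square mod `q₂` this contradicts quadratic
reciprocity for two primes `≡ 3 (mod 4)`.
-/

open NumberField IntermediateField Polynomial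

theorem ZMod.isSquare_of_sq_sub_mul_sq_eq_four_mul {p : ℕ} [Fact p.Prime] (hp2 : p ≠ 2)
    {d a b n : ℤ} (hd : (p : ℤ) ∣ d) (h : a ^ 2 - d * b ^ 2 = 4 * n) :
    IsSquare (n : ZMod p) := by
  have h2 : (2 : ZMod p) ≠ 0 := Ring.two_ne_zero (by rwa [ZMod.ringChar_zmod_n])
  have hd0 : (d : ZMod p) = 0 := (ZMod.intCast_zmod_eq_zero_iff_dvd d p).mpr hd
  have hmod : (a : ZMod p) ^ 2 = 4 * n := by
    have := congrArg (Int.cast : ℤ → ZMod p) h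
    push_cast [hd0] at this
    linear_combination this
  exact ⟨a / 2, by field_simp; linear_combination -hmod⟩

theorem sq_sub_mul_sq_ne_four_mul {q₁ q₂ : ℕ} [Fact q₁.Prime] [Fact q₂.Prime] (hne : q₁ ≠ q₂)
    (hq₁4 : q₁ % 4 = 3) (hq₂4 : q₂ % 4 = 3) (hres : IsSquare (q₁ : ZMod q₂)) (a b : ℤ) :
    a ^ 2 - (q₁ * q₂ : ℤ) * b ^ 2 ≠ 4 * q₂ := fun h ↦
  (ZMod.exists_sq_eq_prime_iff_of_mod_four_eq_three hq₁4 hq₂4 hne).mp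
    (by simpa using ZMod.isSquare_of_sq_sub_mul_sq_eq_four_mul (by omega) (dvd_mul_right _ _) h)
    hres

theorem Rat.exists_intCast_eq_of_squarefree_mul_sq {d n : ℤ} (hd : Squarefree d) {r : ℚ}
    (h : d * r ^ 2 = n) : ∃ m : ℤ, r = m := by
  have hnum : d * r.num ^ 2 = n * (r.den : ℤ) ^ 2 := by
    have : (d : ℚ) * r.num ^ 2 = n * (r.den : ℚ) ^ 2 := by rw [← r.mul_den_eq_num, ← h]; ring
    exact_mod_cast this
  have hcop : IsCoprime (r.den : ℤ) r.num := by
    rw [Int.isCoprime_iff_gcd_eq_one]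
    exact r.reduced.symm
  have hden : IsUnit (r.den : ℤ) :=
    hd _ (by rw [← pow_two]; exact hcop.pow.dvd_of_dvd_mul_right ⟨n, by rw [hnum]; ring⟩)
  have hden1 : r.den = 1 := by simpa [Int.isUnit_iff_natAbs_eq] using hden
  exact ⟨r.num, (Rat.coe_int_num_of_den_eq_one hden1).symm⟩

section QuadraticBasis

variable {R A : Type*} [CommRing R] [CommRing A] [Algebra R A] {b : Module.Basis (Fin 2) R A}
  {d : R}

theorem Algebra.leftMulMatrix_smul_add_smul (h0 : b 0 = 1) (h1 : b 1 * b 1 = algebraMap R A d)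
    (p q : R) : Algebra.leftMulMatrix b (p • b 0 + q • b 1) = !![p, d * q; q, p] := by
  have e0 : (p • b 0 + q • b 1) * b 0 = p • b 0 + q • b 1 := by rw [h0, mul_one]
  have e1 : (p • b 0 + q • b 1) * b 1 = (d * q) • b 0 + p • b 1 := by
    rw [add_mul, smul_mul_assoc, smul_mul_assoc, h0, one_mul, h1, Algebra.algebraMap_eq_smul_one]
    module
  ext i j
  rw [Algebra.leftMulMatrix_eq_repr_mul]
  fin_cases i <;> fin_cases j <;> simp [e0, e1]

theorem Algebra.norm_smul_add_smul (h0 : b 0 = 1) (h1 : b 1 * b 1 = algebraMap R A d) (p q : R) :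
    Algebra.norm R (p • b 0 + q • b 1) = p ^ 2 - d * q ^ 2 := by
  rw [Algebra.norm_eq_matrix_det b, Algebra.leftMulMatrix_smul_add_smul h0 h1,
    Matrix.det_fin_two_of]
  ring

theorem Algebra.trace_smul_add_smul (h0 : b 0 = 1) (h1 : b 1 * b 1 = algebraMap R A d) (p q : R) :
    Algebra.trace R A (p • b 0 + q • b 1) = 2 * p := by
  rw [Algebra.trace_eq_matrix_trace b, Algebra.leftMulMatrix_smul_add_smul h0 h1,
    Matrix.trace_fin_two_of]
  ring

end QuadraticBasis

namespace IntermediateField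

variable {E F : Type*} [Field E] [Field F] [Algebra E F] {θ : F} {c : E}

theorem isIntegral_of_sq_eq (hθ : θ ^ 2 = algebraMap E F c) : IsIntegral E θ :=
  .of_pow two_pos (hθ ▸ isIntegral_algebraMap)

theorem finrank_adjoin_simple_le_two_of_sq_eq (hθ : θ ^ 2 = algebraMap E F c) :
    Module.finrank E E⟮θ⟯ ≤ 2 := by
  rw [adjoin.finrank (isIntegral_of_sq_eq hθ), ← natDegree_X_pow_sub_C (n := 2) (r := c)]
  refine natDegree_le_natDegree
    (minpoly.degree_le_of_ne_zero E θ (X_pow_sub_C_ne_zero two_pos c) ?_)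
  simp [hθ]

theorem linearIndependent_one_gen_of_notMem_range (hθE : θ ∉ Set.range (algebraMap E F)) :
    LinearIndependent E ![1, AdjoinSimple.gen E θ] := by
  rw [LinearIndependent.pair_iff]
  intro s t hst
  have hst' : algebraMap E F s + t • θ = 0 := by
    simpa [Algebra.smul_def] using congrArg (algebraMap E⟮θ⟯ F) hst
  by_cases ht : t = 0
  · subst ht
    simpa using hst'
  · refine absurd ⟨-s / t, ?_⟩ hθE
    rw [map_div₀, map_neg, div_eq_iff ((_root_.map_ne_zero _).mpr ht)]
    rw [Algebra.smul_def] at hst'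
    linear_combination -hst'

theorem finrank_adjoin_simple_eq_two_of_sq_eq (hθ : θ ^ 2 = algebraMap E F c)
    (hθE : θ ∉ Set.range (algebraMap E F)) : Module.finrank E E⟮θ⟯ = 2 := by
  have := adjoin.finiteDimensional (isIntegral_of_sq_eq hθ)
  refine le_antisymm (finrank_adjoin_simple_le_two_of_sq_eq hθ) ?_
  simpa using (linearIndependent_one_gen_of_notMem_range hθE).fintype_card_le_finrank

noncomputable def adjoinSqrtBasis (hθ : θ ^ 2 = algebraMap E F c)
    (hθE : θ ∉ Set.range (algebraMap E F)) : Module.Basis (Fin 2) E E⟮θ⟯ :=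
  haveI := adjoin.finiteDimensional (isIntegral_of_sq_eq hθ)
  basisOfLinearIndependentOfCardEqFinrank (linearIndependent_one_gen_of_notMem_range hθE)
    (by simp [finrank_adjoin_simple_eq_two_of_sq_eq hθ hθE])

variable (hθ : θ ^ 2 = algebraMap E F c) (hθE : θ ∉ Set.range (algebraMap E F))

@[simp]
theorem adjoinSqrtBasis_zero : adjoinSqrtBasis hθ hθE 0 = 1 := by
  simp [adjoinSqrtBasis]

@[simp]
theorem adjoinSqrtBasis_one : adjoinSqrtBasis hθ hθE 1 = AdjoinSimple.gen E θ := by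
  simp [adjoinSqrtBasis]

theorem adjoinSqrtBasis_one_mul_self :
    adjoinSqrtBasis hθ hθE 1 * adjoinSqrtBasis hθ hθE 1 = algebraMap E E⟮θ⟯ c := by
  apply Subtype.ext
  simp [← pow_two, hθ]

end IntermediateField

theorem exists_sq_sub_mul_sq_eq_four_mul_norm {F : Type*} [Field F] [CharZero F] {θ : F}
    {d : ℤ} (hd : Squarefree d) (hθ : θ ^ 2 = d) (hθℚ : θ ∉ Set.range (algebraMap ℚ F))
    [NumberField ℚ⟮θ⟯] (α : 𝓞 ℚ⟮θ⟯) :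
    ∃ t u : ℤ, t ^ 2 - d * u ^ 2 = 4 * Algebra.norm ℤ α := by
  have hθ' : θ ^ 2 = algebraMap ℚ F d := by rw [hθ, map_intCast]
  set b := adjoinSqrtBasis hθ' hθℚ
  have h0 := adjoinSqrtBasis_zero hθ' hθℚ
  have h1 := adjoinSqrtBasis_one_mul_self hθ' hθℚ
  obtain ⟨p, q, hα⟩ : ∃ p q : ℚ, (α : ℚ⟮θ⟯) = p • b 0 + q • b 1 :=
    ⟨b.repr α 0, b.repr α 1, (b.sum_repr α).symm.trans (Fin.sum_univ_two _)⟩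
  have htrace : (Algebra.trace ℤ _ α : ℚ) = 2 * p := by
    rw [Algebra.coe_trace_int, hα, Algebra.trace_smul_add_smul h0 h1]
  have hnorm : (Algebra.norm ℤ α : ℚ) = p ^ 2 - d * q ^ 2 := by
    rw [Algebra.coe_norm_int, hα, Algebra.norm_smul_add_smul h0 h1]
  obtain ⟨u, hu⟩ := Rat.exists_intCast_eq_of_squarefree_mul_sq hd
    (n := Algebra.trace ℤ _ α ^ 2 - 4 * Algebra.norm ℤ α) (r := 2 * q) (by
      push_cast [htrace, hnorm]; ring)
  refine ⟨Algebra.trace ℤ _ α, u, ?_⟩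
  have : (Algebra.trace ℤ _ α : ℚ) ^ 2 - d * (u : ℚ) ^ 2 = 4 * Algebra.norm ℤ α := by
    rw [← hu, htrace, hnorm]; ring
  exact_mod_cast this

/-- Let `q₁, q₂` be distinct primes `≡ 3 (mod 4)` with `q₁` a quadratic residue mod `q₂`.
Then `q₂` is not the norm of an algebraic integer of `ℚ(√(q₁q₂))`. -/
theorem q₂_not_norm_of_integer
    (q₁ q₂ : ℕ) (hq₁ : q₁.Prime) (hq₂ : q₂.Prime) (hne : q₁ ≠ q₂)
    (hq₁4 : q₁ % 4 = 3) (hq₂4 : q₂ % 4 = 3)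
    (hres : IsSquare ((q₁ : ZMod q₂)))
    (K : IntermediateField ℚ ℝ) (hK : K = ℚ⟮(Real.sqrt (q₁ * q₂ : ℕ))⟯) [NumberField K] :
    ¬ ∃ α : 𝓞 K, Algebra.norm ℤ α = q₂ := by
  subst hK
  have := Fact.mk hq₁
  have := Fact.mk hq₂
  rintro ⟨α, hα⟩
  have hsf : Squarefree (q₁ * q₂) :=
    (Nat.squarefree_mul ((Nat.coprime_primes hq₁ hq₂).mpr hne)).mpr
      ⟨hq₁.squarefree, hq₂.squarefree⟩
  have hnotsq : ¬ IsSquare (q₁ * q₂) := by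
    rintro ⟨m, hm⟩
    have := Nat.isUnit_iff.mp (hsf m ⟨1, by rw [hm, mul_one]⟩)
    subst this
    exact hq₁.one_lt.ne' (Nat.eq_one_of_mul_eq_one_right hm)
  obtain ⟨t, u, htu⟩ := exists_sq_sub_mul_sq_eq_four_mul_norm (Int.squarefree_natCast.mpr hsf)
    (Real.sq_sqrt (Nat.cast_nonneg _)) (irrational_sqrt_natCast_iff.mpr hnotsq) α
  rw [hα] at htu
  exact sq_sub_mul_sq_ne_four_mul hne hq₁4 hq₂4 hres t u (by exact_mod_cast htu)
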